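/- arXiv:2211.07411 — 2 statements merged into one kernel-verified Lean document; each statement's English description precedes it below -/
import Mathlib

section
/- Let F ∈ ℝ^{n×n} with ρ(F) ≥ 1 having a real eigenvector w̄, ‖w̄‖ = W, for an eigenvalue of modulus ρ(F). Suppose stage costs satisfy c_t(x,u) ≥ M·‖x‖² with M > 0. Then for the trajectory x₀ = 0, x_{t+1} = Fx_t + w̄ and any input sequence u_t, it is impossible for there to exist constants C̄₀, C̄_w with ∑_{t=0}^T c_t(x_t,u_t) ≤ C̄₀ + C̄_w·T for all T > 0. -/
open Filter Finset Matrix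
open scoped Matrix.Norms.L2Operator

/-!
Started at `x₀ = 0` and driven by an eigenvector `w̄` of `F` for `ρ = ρ(F)`, the trajectory stays
on the line through `w̄`: `x_t = (1 + ρ + ⋯ + ρ^{t-1}) • w̄`. Since `ρ ≥ 1` this gives
`‖x_t‖ ≥ t ‖w̄‖`, so already the last stage cost satisfies `c_T ≥ M ‖w̄‖² T²`, and a quadratic
in `T` eventually beats every affine bound `C̄₀ + C̄_w T`.
-/

/-- The spectral radius of a real square matrix: the maximum modulus of its complex
eigenvalues, i.e. the spectral radius of its complexification. -/
noncomputable def specRad {n : ℕ} (F : Matrix (Fin n) (Fin n) ℝ) : ℝ :=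
  (spectralRadius ℂ (F.map Complex.ofReal)).toReal

theorem natCast_le_geom_sum {R : Type*} [Semiring R] [PartialOrder R] [IsOrderedRing R]
    {r : R} (hr : 1 ≤ r) (t : ℕ) : (t : R) ≤ ∑ k ∈ range t, r ^ k := by
  simpa using card_nsmul_le_sum (range t) (r ^ ·) 1 fun k _ => one_le_pow₀ hr

theorem eq_geom_sum_smul_of_affine_recursion {R E : Type*} [CommSemiring R] [AddCommMonoid E]
    [Module R E] {f : E →ₗ[R] E} {r : R} {w : E} {x : ℕ → E} (hw : f w = r • w)
    (hx0 : x 0 = 0) (hxs : ∀ t, x (t + 1) = f (x t) + w) (t : ℕ) :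
    x t = (∑ k ∈ range t, r ^ k) • w := by
  induction t with
  | zero => simpa using hx0
  | succ t ih =>
    rw [hxs t, ih, map_smul, hw, smul_smul, geom_sum_succ, add_smul, one_smul, mul_comm]

theorem natCast_mul_norm_le_of_affine_recursion {E : Type*} [NormedAddCommGroup E]
    [NormedSpace ℝ E] {f : E →ₗ[ℝ] E} {w : E} {x : ℕ → E} {r : ℝ} (hr : 1 ≤ r)
    (hw : f w = r • w) (hx0 : x 0 = 0) (hxs : ∀ t, x (t + 1) = f (x t) + w) (t : ℕ) :
    t * ‖w‖ ≤ ‖x t‖ := by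
  have hgeom := natCast_le_geom_sum hr t
  rw [eq_geom_sum_smul_of_affine_recursion hw hx0 hxs t, norm_smul, Real.norm_eq_abs,
    abs_of_nonneg ((Nat.cast_nonneg t).trans hgeom)]
  gcongr

theorem exists_nat_affine_lt_quadratic {a : ℝ} (ha : 0 < a) (C₀ Cw : ℝ) :
    ∃ T : ℕ, 0 < T ∧ C₀ + Cw * T < a * T ^ 2 := by
  set T := ⌈(|C₀| + |Cw|) / a⌉₊ + 1
  have hT : (1 : ℝ) ≤ T := by simp [T]
  have haT : |C₀| + |Cw| < a * T := by
    rw [← div_lt_iff₀' ha]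
    exact (Nat.le_ceil _).trans_lt (by simp [T])
  refine ⟨T, by positivity, ?_⟩
  calc C₀ + Cw * T ≤ |C₀| * T + |Cw| * T := by
        gcongr
        · exact (le_abs_self C₀).trans (le_mul_of_one_le_right (abs_nonneg C₀) hT)
        · exact le_abs_self Cw
    _ = (|C₀| + |Cw|) * T := by ring
    _ < a * T * T := by gcongr
    _ = a * T ^ 2 := by ring

theorem no_linear_cost_bound_of_unstable_general {n m : ℕ}
    (F : Matrix (Fin n) (Fin n) ℝ) (hρ : 1 ≤ specRad F)
    (wbar : EuclideanSpace ℝ (Fin n)) (hwbar : wbar ≠ 0)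
    (heig : Matrix.toEuclideanLin F wbar = specRad F • wbar)
    (c : ℕ → EuclideanSpace ℝ (Fin n) → EuclideanSpace ℝ (Fin m) → ℝ)
    (M : ℝ) (hM : 0 < M) (hclb : ∀ t x u, M * ‖x‖ ^ 2 ≤ c t x u)
    (x : ℕ → EuclideanSpace ℝ (Fin n)) (hx0 : x 0 = 0)
    (hxs : ∀ t, x (t + 1) = Matrix.toEuclideanLin F (x t) + wbar) :
    ∀ u : ℕ → EuclideanSpace ℝ (Fin m),
      ¬∃ C₀ Cw : ℝ, ∀ T : ℕ, 0 < T →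
          ∑ t ∈ Finset.range (T + 1), c t (x t) (u t) ≤ C₀ + Cw * T := by
  rintro u ⟨C₀, Cw, hbound⟩
  have hgrowth := natCast_mul_norm_le_of_affine_recursion hρ heig hx0 hxs
  obtain ⟨T, hT, hlt⟩ :=
    exists_nat_affine_lt_quadratic (mul_pos hM (pow_pos (norm_pos_iff.mpr hwbar) 2)) C₀ Cw
  have hcost_nonneg (t : ℕ) : 0 ≤ c t (x t) (u t) := (by positivity : 0 ≤ M * _).trans (hclb ..)
  have hlast : M * ‖wbar‖ ^ 2 * T ^ 2 ≤ ∑ t ∈ range (T + 1), c t (x t) (u t) :=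
    calc M * ‖wbar‖ ^ 2 * T ^ 2 = M * (T * ‖wbar‖) ^ 2 := by ring
      _ ≤ M * ‖x T‖ ^ 2 := by gcongr; exact hgrowth T
      _ ≤ c T (x T) (u T) := hclb ..
      _ ≤ ∑ t ∈ range (T + 1), c t (x t) (u t) :=
        single_le_sum (fun t _ => hcost_nonneg t) (self_mem_range_succ T)
  linarith [hbound T hT]

/-- If `ρ(F) ≥ 1` with a real eigenvector `w̄` (of norm `W`) for an eigenvalue equal to the
spectral radius, and stage costs satisfy `c_t(x,u) ≥ M‖x‖²` with `M > 0`, then for the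
trajectory `x₀ = 0`, `x_{t+1} = Fx_t + w̄` and any input sequence `u_t`, no constants
`C̄₀, C̄_w` can satisfy `∑_{t=0}^T c_t(x_t,u_t) ≤ C̄₀ + C̄_w·T` for all `T > 0`. -/
theorem no_linear_cost_bound_of_unstable {n m : ℕ}
    (F : Matrix (Fin n) (Fin n) ℝ) (hρ : 1 ≤ specRad F)
    (wbar : EuclideanSpace ℝ (Fin n)) (hwbar : wbar ≠ 0) (W : ℝ) (hWnorm : ‖wbar‖ = W)
    (heig : Matrix.toEuclideanLin F wbar = specRad F • wbar)
    (c : ℕ → EuclideanSpace ℝ (Fin n) → EuclideanSpace ℝ (Fin m) → ℝ)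
    (M : ℝ) (hM : 0 < M) (hclb : ∀ t x u, M * ‖x‖ ^ 2 ≤ c t x u)
    (x : ℕ → EuclideanSpace ℝ (Fin n)) (hx0 : x 0 = 0)
    (hxs : ∀ t, x (t + 1) = Matrix.toEuclideanLin F (x t) + wbar) :
    ∀ u : ℕ → EuclideanSpace ℝ (Fin m),
      ¬∃ C₀ Cw : ℝ, ∀ T : ℕ, 0 < T →
          ∑ t ∈ Finset.range (T + 1), c t (x t) (u t) ≤ C₀ + Cw * T :=
  no_linear_cost_bound_of_unstable_general F hρ wbar hwbar heig c M hM hclb x hx0 hxs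
end

section
/- Suppose stage costs satisfy c_t(x,u) ≥ M‖x‖² with M > 0, each F_t is invertible, and 0 < liminf_{T→∞}‖Φ(T,0)‖ ≤ limsup_{T→∞}‖Φ(T,0)‖ < ∞. Then there exist a nonzero vector w̄₀ and C > 0 with ‖C·Φ(k,0)w̄₀‖ ≤ W for all k, such that the trajectory x₀ = 0, w_{k-1} = C·Φ(k,0)w̄₀ satisfies ∑_{t=0}^T c_t(x_t,u_t) ≥ M·C²·∑_{t=1}^T t²·‖Φ(t,0)w̄₀‖², and liminf_{T→∞}(1/T)∑_{t=0}^T c_t(x_t,u_t) = ∞; hence no linear-in-T bound on the cumulative cost holds. -/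
/-!
Feeding the disturbance `w_{k-1} = C Φ(k,0) w` gives the state `x_t = C t Φ(t,0) w`, so the
cost up to `T` is at least `M C² ∑_{t ≤ T} t² ‖Φ(t,0) w‖²`, and it suffices to choose `w` making
this sum superlinear in `T`. Since `‖Φ(t,0)‖ > c > 0` for large `t`, every `A = Φ(t,0)` has a
unit vector `u` with `‖A v‖ ≥ c |⟪u, v⟫|` for all `v` (normalise `A† A x` for an almost norming
`x`). Choosing the signs of `w = ∑ ±3⁻ʲ uⱼ` greedily, where `uⱼ` belongs to `Φ(27ʲ,0)`, keeps
`|⟪uⱼ, w⟫| ≥ 3⁻ʲ / 2`, so the single term `t = 27ʲ` contributes `≥ (c² / 4) 27ʲ 3ʲ`, and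
monotonicity of the sum covers the `T` between consecutive powers of `27`. The upper bound on
`‖Φ(t,0)‖` keeps the disturbances bounded, which fixes `C`.
-/

open Filter Finset

/-- `Phi F k t` is the state transition matrix `Φ(t, k) = F_{t-1} ⋯ F_k` (with `Φ(k, k) = 1`)
of the linear time-varying system `x_{t+1} = F_t x_t` on `ℝ^n` (Euclidean norm). -/
noncomputable def Phi {n : ℕ}
    (F : ℕ → (EuclideanSpace ℝ (Fin n) →L[ℝ] EuclideanSpace ℝ (Fin n)))
    (k : ℕ) : ℕ → (EuclideanSpace ℝ (Fin n) →L[ℝ] EuclideanSpace ℝ (Fin n))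
  | 0 => 1
  | t + 1 => if t + 1 ≤ k then 1 else F t * Phi F k t

section Phi

variable {n : ℕ} (F : ℕ → (EuclideanSpace ℝ (Fin n) →L[ℝ] EuclideanSpace ℝ (Fin n)))

@[simp]
lemma Phi_self (k : ℕ) : Phi F k k = 1 := by
  cases k <;> simp [Phi]

lemma Phi_succ {k t : ℕ} (h : k ≤ t) : Phi F k (t + 1) = F t * Phi F k t := by
  simp [Phi, not_lt.2 h]

lemma Phi_mul_Phi_zero {k t : ℕ} (h : k ≤ t) : Phi F k t * Phi F 0 k = Phi F 0 t := by
  induction t, h using Nat.le_induction with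
  | base => rw [Phi_self, one_mul]
  | succ t hkt ih => rw [Phi_succ F hkt, Phi_succ F (Nat.zero_le t), mul_assoc, ih]

lemma Phi_apply_Phi_zero {k t : ℕ} (h : k ≤ t) (y : EuclideanSpace ℝ (Fin n)) :
    Phi F k t (Phi F 0 k y) = Phi F 0 t y := by
  rw [← Phi_mul_Phi_zero F h]; rfl

lemma sum_Icc_Phi_apply_Phi_zero (t : ℕ) (y : EuclideanSpace ℝ (Fin n)) :
    ∑ k ∈ Icc 1 t, Phi F k t (Phi F 0 k y) = (t : ℝ) • Phi F 0 t y := by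
  rw [sum_congr rfl fun k hk => Phi_apply_Phi_zero F (mem_Icc.1 hk).2 y, sum_const,
    Nat.card_Icc, Nat.add_sub_cancel, Nat.cast_smul_eq_nsmul]

lemma norm_sum_Icc_Phi_apply_smul_Phi_zero {C : ℝ} (hC : 0 ≤ C) (t : ℕ)
    (y : EuclideanSpace ℝ (Fin n)) :
    ‖∑ k ∈ Icc 1 t, Phi F k t (C • Phi F 0 k y)‖ = C * t * ‖Phi F 0 t y‖ := by
  simp_rw [map_smul, ← smul_sum, sum_Icc_Phi_apply_Phi_zero, norm_smul, Real.norm_of_nonneg hC,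
    Real.norm_natCast, mul_assoc]

end Phi

open RealInnerProductSpace Topology

lemma exists_pos_eventually_lt_of_liminf_pos {α : Type*} {l : Filter α} {f : α → ℝ}
    (h : 0 < l.liminf (fun a => (f a : EReal))) : ∃ c > 0, ∀ᶠ a in l, c < f a := by
  obtain ⟨c, hc, hcf⟩ := EReal.exists_between_coe_real h
  exact ⟨c, EReal.coe_pos.1 hc,
    (eventually_lt_of_lt_liminf hcf).mono fun _ => EReal.coe_lt_coe_iff.1⟩

lemma bddAbove_range_of_limsup_lt_top {f : ℕ → ℝ}
    (h : atTop.limsup (fun T => (f T : EReal)) < ⊤) : BddAbove (Set.range f) := by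
  obtain ⟨B, hB, -⟩ := EReal.exists_between_coe_real h
  exact IsBoundedUnder.bddAbove_range ⟨B, eventually_map.2 <|
    (eventually_lt_of_limsup_lt hB).mono fun _ hT => (EReal.coe_lt_coe_iff.1 hT).le⟩

lemma sum_Icc_le_sum_range_of_forall_le {g h : ℕ → ℝ} (hgh : ∀ t, g t ≤ h t)
    (hg : ∀ t, 0 ≤ g t) (T : ℕ) : ∑ t ∈ Icc 1 T, g t ≤ ∑ t ∈ range (T + 1), h t :=
  (sum_le_sum fun t _ => hgh t).trans <| sum_le_sum_of_subset_of_nonneg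
    (fun t ht => by simp only [mem_Icc, mem_range] at ht ⊢; omega)
    fun t _ _ => (hg t).trans (hgh t)

lemma not_exists_le_affine_of_tendsto_div_atTop {S : ℕ → ℝ}
    (h : Tendsto (fun T => S T / T) atTop atTop) : ¬∃ C₀ Cw : ℝ, ∀ T : ℕ, S T ≤ C₀ + Cw * T := by
  rintro ⟨C₀, Cw, hS⟩
  have hlim : Tendsto (fun T : ℕ => (C₀ + Cw * T) / T) atTop (𝓝 (0 + Cw)) := by
    refine ((tendsto_const_div_atTop_nhds_zero_nat C₀).add_const Cw).congr' ?_
    filter_upwards [eventually_ne_atTop 0] with T hT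
    field_simp
  exact not_tendsto_atTop_of_tendsto_nhds hlim <|
    tendsto_atTop_mono (fun T => div_le_div_of_nonneg_right (hS T) T.cast_nonneg) h

theorem tendsto_div_atTop_of_tendsto_pow {f : ℕ → ℝ} (hf : Monotone f) {b : ℕ} (hb : 1 < b)
    (h : Tendsto (fun j => f (b ^ j) / (b ^ j : ℕ)) atTop atTop) :
    Tendsto (fun T => f T / T) atTop atTop := by
  have hlog : Tendsto (Nat.log b) atTop atTop :=
    tendsto_atTop_atTop_of_monotone (fun _ _ => Nat.log_mono_right)
      fun j => ⟨b ^ j, (Nat.log_pow hb j).ge⟩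
  have hb0 : (0 : ℝ) < b := by positivity
  refine tendsto_atTop_mono' _ ?_ ((h.atTop_div_const hb0).comp hlog)
  filter_upwards [eventually_ne_atTop 0, (h.comp hlog).eventually_ge_atTop 0] with T hT hnn
  simp only [Function.comp_apply] at hnn ⊢
  have hpow_pos : (0 : ℝ) < (b ^ Nat.log b T : ℕ) := by positivity
  have hf_nonneg : 0 ≤ f (b ^ Nat.log b T) := by simpa using (le_div_iff₀ hpow_pos).1 hnn
  have hlow : b ^ Nat.log b T ≤ T := Nat.pow_log_le_self b hT
  have hup : (T : ℝ) ≤ (b ^ Nat.log b T : ℕ) * b := by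
    exact_mod_cast (Nat.lt_pow_succ_log_self hb T).le
  calc f (b ^ Nat.log b T) / (b ^ Nat.log b T : ℕ) / b
      = f (b ^ Nat.log b T) / ((b ^ Nat.log b T : ℕ) * b) := by rw [div_div]
    _ ≤ f (b ^ Nat.log b T) / T := by gcongr
    _ ≤ f T / T := by gcongr; exact hf hlow

section InnerProductSpace

variable {E F : Type*} [NormedAddCommGroup E] [InnerProductSpace ℝ E] [NormedAddCommGroup F]
  [InnerProductSpace ℝ F]

noncomputable def signedGeometricSum (u : ℕ → E) : ℕ → E
  | 0 => 0
  | j + 1 =>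
    signedGeometricSum u j +
      (if 0 ≤ ⟪u j, signedGeometricSum u j⟫ then (1 / 3 : ℝ) ^ j else -(1 / 3) ^ j) • u j

lemma abs_inner_signedGeometricSum_succ {u : ℕ → E} (hu : ∀ j, ‖u j‖ = 1) (j : ℕ) :
    (1 / 3 : ℝ) ^ j ≤ |⟪u j, signedGeometricSum u (j + 1)⟫| := by
  have hpos : (0 : ℝ) < (1 / 3) ^ j := by positivity
  simp only [signedGeometricSum, inner_add_right, inner_smul_right, real_inner_self_eq_norm_sq,
    hu, one_pow, mul_one]
  split_ifs with h
  · rw [abs_of_nonneg (by positivity)]; linarith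
  · rw [abs_of_neg (by linarith)]; linarith

lemma dist_signedGeometricSum_succ {u : ℕ → E} (hu : ∀ j, ‖u j‖ = 1) (j : ℕ) :
    dist (signedGeometricSum u j) (signedGeometricSum u (j + 1)) ≤ 1 * (1 / 3 : ℝ) ^ j := by
  rw [dist_eq_norm, signedGeometricSum, sub_add_cancel_left, norm_neg, norm_smul, hu, mul_one,
    one_mul]
  split_ifs <;> simp

-- Step `j` moves `⟪u j, ·⟫` away from zero by `3⁻ʲ`; all later steps together move it by at most
-- `3⁻ʲ / 2`.
theorem exists_forall_le_abs_inner [CompleteSpace E] {u : ℕ → E} (hu : ∀ j, ‖u j‖ = 1) :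
    ∃ v : E, ∀ j, (1 / 3 : ℝ) ^ j / 2 ≤ |⟪u j, v⟫| := by
  obtain ⟨v, hv⟩ := cauchySeq_tendsto_of_complete
    (cauchySeq_of_le_geometric (1 / 3 : ℝ) 1 (by norm_num) (dist_signedGeometricSum_succ hu))
  refine ⟨v, fun j => ?_⟩
  have htail := dist_le_of_le_geometric_of_tendsto (1 / 3 : ℝ) 1 (by norm_num)
    (dist_signedGeometricSum_succ hu) hv (j + 1)
  rw [pow_succ, show ∀ a : ℝ, 1 * (a * (1 / 3)) / (1 - 1 / 3) = a / 2 by intro; ring] at htail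
  have hinner : |⟪u j, signedGeometricSum u (j + 1)⟫ - ⟪u j, v⟫| ≤
      dist (signedGeometricSum u (j + 1)) v := by
    rw [dist_eq_norm, ← inner_sub_right]
    simpa [hu] using abs_real_inner_le_norm (u j) (signedGeometricSum u (j + 1) - v)
  have hstep := abs_inner_signedGeometricSum_succ hu j
  have htri := abs_sub_abs_le_abs_sub ⟪u j, signedGeometricSum u (j + 1)⟫ ⟪u j, v⟫
  linarith

theorem exists_unit_mul_abs_inner_le_norm_apply [CompleteSpace E] [CompleteSpace F]
    (A : E →L[ℝ] F) {r : ℝ} (hr : 0 ≤ r) (hrA : r < ‖A‖) :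
    ∃ w : E, ‖w‖ = 1 ∧ ∀ v, r * |⟪w, v⟫| ≤ ‖A v‖ := by
  obtain ⟨x, hx, hrx⟩ := A.exists_lt_apply_of_lt_opNorm hrA
  set w := ContinuousLinearMap.adjoint A (A x)
  have hw_inner (v : E) : ⟪w, v⟫ = ⟪A x, A v⟫ := ContinuousLinearMap.adjoint_inner_left A v (A x)
  have hw_norm : ‖A x‖ ^ 2 ≤ ‖w‖ := by
    rw [← real_inner_self_eq_norm_sq, ← hw_inner]
    exact (real_inner_le_norm w x).trans (mul_le_of_le_one_right (norm_nonneg w) hx.le)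
  have hw_pos : 0 < ‖w‖ := lt_of_lt_of_le (by nlinarith) hw_norm
  refine ⟨‖w‖⁻¹ • w, by rw [norm_smul, norm_inv, norm_norm, inv_mul_cancel₀ hw_pos.ne'],
    fun v => ?_⟩
  rw [real_inner_smul_left, abs_mul, abs_inv, abs_norm, hw_inner]
  calc r * (‖w‖⁻¹ * |⟪A x, A v⟫|) ≤ ‖A x‖ * (‖w‖⁻¹ * (‖A x‖ * ‖A v‖)) := by
        gcongr
        exact abs_real_inner_le_norm _ _
    _ = ‖A x‖ ^ 2 / ‖w‖ * ‖A v‖ := by ring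
    _ ≤ ‖A v‖ := mul_le_of_le_one_left (norm_nonneg _) ((div_le_one hw_pos).2 hw_norm)

theorem exists_forall_le_norm_apply [CompleteSpace E] [CompleteSpace F]
    (A : ℕ → E →L[ℝ] F) {r : ℝ} (hr : 0 ≤ r) (hA : ∀ j, r < ‖A j‖) :
    ∃ v : E, ∀ j, r * ((1 / 3 : ℝ) ^ j / 2) ≤ ‖A j v‖ := by
  choose w hw_norm hw using fun j => exists_unit_mul_abs_inner_le_norm_apply (A j) hr (hA j)
  obtain ⟨v, hv⟩ := exists_forall_le_abs_inner hw_norm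
  exact ⟨v, fun j => (mul_le_mul_of_nonneg_left (hv j) hr).trans (hw j v)⟩

theorem exists_tendsto_sum_sq_mul_norm_sq_div [CompleteSpace E] [CompleteSpace F]
    (Φ : ℕ → E →L[ℝ] F) {c : ℝ} (hc : 0 < c)
    (hΦ : ∀ᶠ t in atTop, c < ‖Φ t‖) :
    ∃ v : E, Tendsto (fun T : ℕ => (∑ t ∈ Icc 1 T, (t : ℝ) ^ 2 * ‖Φ t v‖ ^ 2) / T) atTop atTop := by
  obtain ⟨N, hN⟩ := eventually_atTop.1 hΦ
  have hNpow (j : ℕ) : N ≤ 27 ^ (j + N) :=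
    (Nat.lt_pow_self (by norm_num)).le.trans' (Nat.le_add_left N j)
  obtain ⟨v, hv⟩ := exists_forall_le_norm_apply (fun j => Φ (27 ^ (j + N))) hc.le
    fun j => hN _ (hNpow j)
  set S : ℕ → ℝ := fun T => ∑ t ∈ Icc 1 T, (t : ℝ) ^ 2 * ‖Φ t v‖ ^ 2
  have hS_mono : Monotone S := fun T T' hTT' =>
    sum_le_sum_of_subset_of_nonneg (Icc_subset_Icc_right hTT') fun _ _ _ => by positivity
  have hterm (k : ℕ) : ((27 ^ k : ℕ) : ℝ) * ‖Φ (27 ^ k) v‖ ^ 2 ≤ S (27 ^ k) / (27 ^ k : ℕ) := by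
    rw [le_div_iff₀ (by positivity), mul_right_comm, ← sq]
    exact single_le_sum (f := fun t : ℕ => (t : ℝ) ^ 2 * ‖Φ t v‖ ^ 2) (fun _ _ => by positivity)
      (mem_Icc.2 ⟨Nat.one_le_pow _ _ (by norm_num), le_rfl⟩)
  have hgeom : Tendsto (fun j : ℕ => c ^ 2 / 4 * (3 : ℝ) ^ j) atTop atTop :=
    (tendsto_pow_atTop_atTop_of_one_lt (by norm_num)).const_mul_atTop (by positivity)
  refine ⟨v, tendsto_div_atTop_of_tendsto_pow hS_mono (by norm_num : 1 < 27) ?_⟩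
  refine (tendsto_add_atTop_iff_nat N).1 (tendsto_atTop_mono (fun j => ?_) hgeom)
  calc c ^ 2 / 4 * (3 : ℝ) ^ j = (27 : ℝ) ^ j * (c * ((1 / 3 : ℝ) ^ j / 2)) ^ 2 := by
        rw [show (27 : ℝ) = 3 * 3 * 3 by norm_num, mul_pow, mul_pow, one_div, inv_pow]
        field_simp
        norm_num
    _ ≤ ((27 ^ (j + N) : ℕ) : ℝ) * ‖Φ (27 ^ (j + N)) v‖ ^ 2 := by
        gcongr
        · push_cast; exact pow_le_pow_right₀ (by norm_num) (Nat.le_add_right j N)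
        · exact hv j
    _ ≤ S (27 ^ (j + N)) / (27 ^ (j + N) : ℕ) := hterm _

end InnerProductSpace

theorem no_linear_bound_of_nondecaying_transition_general {n m : ℕ}
    (F : ℕ → (EuclideanSpace ℝ (Fin n) →L[ℝ] EuclideanSpace ℝ (Fin n)))
    (c : ℕ → EuclideanSpace ℝ (Fin n) → EuclideanSpace ℝ (Fin m) → ℝ)
    (M W : ℝ) (hM : 0 < M) (hW : 0 < W)
    (hclb : ∀ t x u, M * ‖x‖ ^ 2 ≤ c t x u)
    (hliminf : 0 < Filter.atTop.liminf (fun T : ℕ => (‖Phi F 0 T‖ : EReal)))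
    (hlimsup : Filter.atTop.limsup (fun T : ℕ => (‖Phi F 0 T‖ : EReal)) < ⊤) :
    ∃ (wbar₀ : EuclideanSpace ℝ (Fin n)) (C : ℝ), wbar₀ ≠ 0 ∧ 0 < C ∧
      (∀ k : ℕ, ‖C • Phi F 0 k wbar₀‖ ≤ W) ∧
      ∀ (x : ℕ → EuclideanSpace ℝ (Fin n)),
        (∀ t, x t = ∑ k ∈ Finset.Icc 1 t, Phi F k t (C • Phi F 0 k wbar₀)) →
        ∀ u : ℕ → EuclideanSpace ℝ (Fin m),
          (∀ T : ℕ, M * C ^ 2 * ∑ t ∈ Finset.Icc 1 T, (t : ℝ) ^ 2 * ‖Phi F 0 t wbar₀‖ ^ 2 ≤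
              ∑ t ∈ Finset.range (T + 1), c t (x t) (u t)) ∧
          Filter.atTop.liminf
              (fun T : ℕ =>
                (((∑ t ∈ Finset.range (T + 1), c t (x t) (u t)) / T : ℝ) : EReal)) = ⊤ ∧
          ¬∃ C₀ Cw : ℝ, ∀ T : ℕ,
              ∑ t ∈ Finset.range (T + 1), c t (x t) (u t) ≤ C₀ + Cw * T := by
  obtain ⟨ε, hε, hΦε⟩ := exists_pos_eventually_lt_of_liminf_pos hliminf
  obtain ⟨B, hB⟩ := bddAbove_range_of_limsup_lt_top hlimsup
  obtain ⟨w, hw⟩ := exists_tendsto_sum_sq_mul_norm_sq_div (Phi F 0 ·) hε hΦε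
  have hw0 : w ≠ 0 := by
    rintro rfl
    simpa using hw.eventually_gt_atTop 0 |>.exists
  have hBw : 0 < B * ‖w‖ := by
    obtain ⟨t, ht⟩ := hΦε.exists
    exact mul_pos (hε.trans (ht.trans_le (hB ⟨t, rfl⟩))) (norm_pos_iff.2 hw0)
  set C := W / (B * ‖w‖)
  have hC : 0 < C := div_pos hW hBw
  refine ⟨w, C, hw0, hC, fun k => ?_, fun x hx u => ?_⟩
  · rw [norm_smul, Real.norm_of_nonneg hC.le, ← div_mul_cancel₀ W hBw.ne']
    exact mul_le_mul_of_nonneg_left ((Phi F 0 k).le_opNorm w |>.trans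
      (mul_le_mul_of_nonneg_right (hB ⟨k, rfl⟩) (norm_nonneg w))) hC.le
  have hcost (T : ℕ) : M * C ^ 2 * ∑ t ∈ Icc 1 T, (t : ℝ) ^ 2 * ‖Phi F 0 t w‖ ^ 2 ≤
      ∑ t ∈ range (T + 1), c t (x t) (u t) := by
    convert sum_Icc_le_sum_range_of_forall_le (fun t => hclb t (x t) (u t))
      (fun t => by positivity) T using 1
    simp_rw [mul_sum, hx, norm_sum_Icc_Phi_apply_smul_Phi_zero F hC.le]
    ring_nf
  have hdiv : Tendsto (fun T : ℕ => (∑ t ∈ range (T + 1), c t (x t) (u t)) / T) atTop atTop :=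
    tendsto_atTop_mono (fun T => by rw [← mul_div_assoc]; gcongr; exact hcost T)
      (hw.const_mul_atTop (by positivity))
  exact ⟨hcost, (EReal.tendsto_coe_atTop.comp hdiv).liminf_eq,
    not_exists_le_affine_of_tendsto_div_atTop hdiv⟩

/-- If stage costs satisfy `c_t(x,u) ≥ M‖x‖²` with `M > 0`, each `F_t` is invertible, and
`0 < liminf_T ‖Φ(T,0)‖ ≤ limsup_T ‖Φ(T,0)‖ < ∞`, then there exist `wbar₀ ≠ 0` and `C > 0` with
`‖C·Φ(k,0)wbar₀‖ ≤ W` for all `k`, such that the trajectory `x₀ = 0`,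
`w_{k-1} = C·Φ(k,0)wbar₀`, i.e. `x_t = ∑_{k=1}^t Φ(t,k)w_{k-1} = C·t·Φ(t,0)wbar₀`, satisfies
`∑_{t=0}^T c_t(x_t,u_t) ≥ M·C²·∑_{t=1}^T t²‖Φ(t,0)wbar₀‖²` and
`liminf_{T→∞}(1/T)∑_{t=0}^T c_t(x_t,u_t) = ∞`; hence no linear-in-`T` cost bound holds. -/
theorem no_linear_bound_of_nondecaying_transition {n m : ℕ}
    (F : ℕ → (EuclideanSpace ℝ (Fin n) →L[ℝ] EuclideanSpace ℝ (Fin n)))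
    (hinv : ∀ t, IsUnit (F t))
    (c : ℕ → EuclideanSpace ℝ (Fin n) → EuclideanSpace ℝ (Fin m) → ℝ)
    (M W : ℝ) (hM : 0 < M) (hW : 0 < W)
    (hclb : ∀ t x u, M * ‖x‖ ^ 2 ≤ c t x u)
    (hliminf : 0 < Filter.atTop.liminf (fun T : ℕ => (‖Phi F 0 T‖ : EReal)))
    (hlimsup : Filter.atTop.limsup (fun T : ℕ => (‖Phi F 0 T‖ : EReal)) < ⊤) :
    ∃ (wbar₀ : EuclideanSpace ℝ (Fin n)) (C : ℝ), wbar₀ ≠ 0 ∧ 0 < C ∧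
      (∀ k : ℕ, ‖C • Phi F 0 k wbar₀‖ ≤ W) ∧
      ∀ (x : ℕ → EuclideanSpace ℝ (Fin n)),
        (∀ t, x t = ∑ k ∈ Finset.Icc 1 t, Phi F k t (C • Phi F 0 k wbar₀)) →
        ∀ u : ℕ → EuclideanSpace ℝ (Fin m),
          (∀ T : ℕ, M * C ^ 2 * ∑ t ∈ Finset.Icc 1 T, (t : ℝ) ^ 2 * ‖Phi F 0 t wbar₀‖ ^ 2 ≤
              ∑ t ∈ Finset.range (T + 1), c t (x t) (u t)) ∧
          Filter.atTop.liminf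
              (fun T : ℕ =>
                (((∑ t ∈ Finset.range (T + 1), c t (x t) (u t)) / T : ℝ) : EReal)) = ⊤ ∧
          ¬∃ C₀ Cw : ℝ, ∀ T : ℕ,
              ∑ t ∈ Finset.range (T + 1), c t (x t) (u t) ≤ C₀ + Cw * T :=
  no_linear_bound_of_nondecaying_transition_general F c M W hM hW hclb hliminf hlimsup
end
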